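/- arXiv:1807.09084 — 2 statements merged into one kernel-verified Lean document; each statement's English description precedes it below -/
import Mathlib

section
/- Let 𝖠 ⊆ M_d(ℝ) be compact and nonempty with a multicone (K_1,…,K_m) and transverse-defining vector w. Then there exist constants τ_1, τ_2, τ_3 > 0 such that: (i) ‖Au‖ ≥ τ_1·‖A‖·‖u‖ for every u ∈ K_1 ∪ ⋯ ∪ K_m and every A ∈ 𝒮(𝖠); (ii) |⟨Au,w⟩| ≥ τ_2·‖A‖·‖u‖ for every u ∈ K_1 ∪ ⋯ ∪ K_m and every A ∈ 𝒮(𝖠); (iii) ‖A_1 A_2‖ ≥ τ_3·‖A_1‖·‖A_2‖ for every A_1, A_2 ∈ 𝒮(𝖠). -/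
open scoped BigOperators Pointwise

noncomputable section

/-- The Euclidean norm of a finitely-indexed vector (real or complex entries). -/
def eucNorm {ι : Type*} [Fintype ι] {E : Type*} [Norm E] (u : ι → E) : ℝ :=
  Real.sqrt (∑ i, ‖u i‖ ^ 2)

/-- The operator norm of a real matrix induced by the Euclidean norm. -/
def opNorm {ι : Type*} [Fintype ι] (A : Matrix ι ι ℝ) : ℝ :=
  sSup ((fun u : ι → ℝ => eucNorm (A.mulVec u)) '' {u : ι → ℝ | eucNorm u = 1})

/-- A multicone for a set of matrices (Definition 1.2). -/
def IsMulticone {ι : Type*} [Fintype ι] (S : Set (Matrix ι ι ℝ)) {m : ℕ}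
    (K : Fin m → Set (ι → ℝ)) (w : ι → ℝ) : Prop :=
  (∀ j, IsClosed (K j)) ∧ (∀ j, Convex ℝ (K j)) ∧ (∀ j, (interior (K j)).Nonempty) ∧
  (∀ j, ∀ c : ℝ, 0 ≤ c → ∀ u ∈ K j, c • u ∈ K j) ∧
  (∑ i, w i ^ 2 = 1) ∧
  (∀ u ∈ ⋃ j, K j, u ≠ 0 → 0 < ∑ i, u i * w i) ∧
  (∀ A ∈ S, ∀ j, ∃ ℓ, ∀ u ∈ K j, u ≠ 0 →
    A.mulVec u ∈ interior (K ℓ) ∨ -A.mulVec u ∈ interior (K ℓ)) ∧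
  (∀ j₁ j₂, j₁ ≠ j₂ → K j₁ ∩ K j₂ = {0})

/-- The set of matrices is multipositive if it admits a multicone. -/
def IsMultipositive {ι : Type*} [Fintype ι] (S : Set (Matrix ι ι ℝ)) : Prop :=
  ∃ (m : ℕ) (_ : 0 < m) (K : Fin m → Set (ι → ℝ)) (w : ι → ℝ), IsMulticone S K w

/-- The semigroup generated by a set of matrices. -/
def semigroupOf {ι : Type*} [Fintype ι] [DecidableEq ι] (S : Set (Matrix ι ι ℝ)) :
    Set (Matrix ι ι ℝ) :=
  {B | ∃ l : List (Matrix ι ι ℝ), l ≠ [] ∧ (∀ M ∈ l, M ∈ S) ∧ B = l.prod}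

/-- The complexification of a set in ℝ^ι. -/
def complexify {ι : Type*} (K : Set (ι → ℝ)) : Set (ι → ℂ) :=
  {z | ∃ (c : ℂ) (u v : ι → ℝ), u ∈ K ∧ v ∈ K ∧
    z = fun i => c * (((u i : ℂ) + (v i : ℂ)) + Complex.I * ((u i : ℂ) - (v i : ℂ)))}

/-- The action of a real matrix on complex vectors. -/
def mulVecC {ι : Type*} [Fintype ι] (A : Matrix ι ι ℝ) (z : ι → ℂ) : ι → ℂ :=
  (A.map (fun x : ℝ => (x : ℂ))).mulVec z

/-- An ℝ-cone: closed, convex, nonempty interior, positively homogeneous, proper. -/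
def IsRCone {ι : Type*} [Fintype ι] (K : Set (ι → ℝ)) : Prop :=
  IsClosed K ∧ Convex ℝ K ∧ (interior K).Nonempty ∧
  (∀ c : ℝ, 0 < c → c • K = K) ∧ K ∩ (-K) = {0}

end

/-!
Let `δ > 0` be such that `⟪u, w⟫ ≥ δ ‖u‖` on every cone. If the closed ball of radius `ρ` about `x`
lies in a cone that `B` maps, up to sign, into a cone, then for unit `y` both `x ± ρ y` lie in that
cone, and comparing `B (x + ρ y)` with `B (x - ρ y)` through `⟪·, w⟫` gives `ρ δ ‖B‖ ≤ ‖B x‖`.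
Each generator maps the convex set `K j ∖ {0}` into the disjoint open sets `± int K ℓ`, hence into
one of them, so every element of the semigroup maps cones into cones up to sign. By compactness
and the Lebesgue number lemma there is a single `ρ` such that the `ρ`-ball about `a u`
(`a ∈ 𝖠`, `u` a unit vector of a cone) lies, up to sign, in a cone. Writing a product as `B a`
gives (i); (ii) follows from (i) and the bound on `⟪·, w⟫`, and (iii) from applying (i) twice to a
fixed vector of a cone.
-/

open Metric Set WithLp
open scoped RealInnerProductSpace

lemma Subsemigroup.exists_mul_of_mem_closure {M : Type*} [Monoid M] {S : Set M} {A : M}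
    (hA : A ∈ Subsemigroup.closure S) : ∃ B ∈ Submonoid.closure S, ∃ a ∈ S, A = B * a := by
  induction hA using Subsemigroup.closure_induction with
  | mem a ha => exact ⟨1, one_mem _, a, ha, (one_mul a).symm⟩
  | mul x y _ _ hx hy =>
    obtain ⟨B, hB, a, ha, rfl⟩ := hx
    obtain ⟨B', hB', a', ha', rfl⟩ := hy
    exact ⟨B * a * B', mul_mem (mul_mem hB (Submonoid.subset_closure ha)) hB', a', ha',
      by simp only [mul_assoc]⟩

section

variable {E : Type*} [NormedAddCommGroup E] [InnerProductSpace ℝ E] {ι : Type*}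

lemma mul_mul_opNorm_le_of_forall_mem_closedBall {F : Type*} [NormedAddCommGroup F]
    [NormedSpace ℝ F] (B : E →L[ℝ] F) (φ : F →L[ℝ] ℝ) {x : E} {ρ δ : ℝ} (hρ : 0 < ρ)
    (hδ : 0 < δ) (h : ∀ z ∈ closedBall x ρ, δ * ‖B z‖ ≤ φ (B z)) :
    ρ * δ * ‖B‖ ≤ φ (B x) := by
  have hunit : ∀ y : E, ‖y‖ = 1 → ρ * δ * ‖B y‖ ≤ φ (B x) := by
    intro y hy
    have hmem : ∀ t : ℝ, |t| = 1 → x + (t * ρ) • y ∈ closedBall x ρ := fun t ht => by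
      simp [norm_smul, hy, ht, abs_of_pos hρ]
    have hp := h _ (hmem 1 abs_one)
    have hq := h _ (hmem (-1) (by simp))
    have hdiff : B (x + (1 * ρ) • y) - B (x + (-1 * ρ) • y) = (2 * ρ) • B y := by
      simp only [map_add, map_smul]; module
    have htri := norm_sub_le (B (x + (1 * ρ) • y)) (B (x + (-1 * ρ) • y))
    rw [hdiff, norm_smul, Real.norm_of_nonneg (by positivity)] at htri
    have hφ : φ (B (x + (1 * ρ) • y)) + φ (B (x + (-1 * ρ) • y)) = 2 * φ (B x) := by
      simp only [map_add, map_smul, smul_eq_mul]; ring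
    nlinarith
  have hφx : 0 ≤ φ (B x) :=
    (mul_nonneg hδ.le (norm_nonneg _)).trans (h x (mem_closedBall_self hρ.le))
  have hB : ‖B‖ ≤ φ (B x) / (ρ * δ) := B.opNorm_le_of_unit_norm (by positivity) fun y hy =>
    (le_div_iff₀' (by positivity)).2 (hunit y hy)
  rwa [le_div_iff₀' (by positivity)] at hB

lemma exists_forall_closedBall_smul_mem (K : ι → Set E) {X : Set E} (hX : IsCompact X)
    (hXK : ∀ x ∈ X, ∃ ℓ, ∃ s : ℝ, |s| = 1 ∧ s • x ∈ interior (K ℓ)) :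
    ∃ ρ > 0, ∀ x ∈ X, ∃ ℓ, ∃ s : ℝ, |s| = 1 ∧ ∀ z ∈ closedBall x ρ, s • z ∈ K ℓ := by
  obtain ⟨ε, hε, hcover⟩ := lebesgue_number_lemma_of_metric
    (c := fun i : ι × {s : ℝ // |s| = 1} => (i.2.1 • ·) ⁻¹' interior (K i.1)) hX
    (fun _ => isOpen_interior.preimage (continuous_const_smul _)) fun x hx => by
      obtain ⟨ℓ, s, hs, hsx⟩ := hXK x hx
      exact mem_iUnion.2 ⟨(ℓ, ⟨s, hs⟩), hsx⟩
  refine ⟨ε / 2, half_pos hε, fun x hx => ?_⟩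
  obtain ⟨⟨ℓ, s, hs⟩, hball⟩ := hcover x hx
  exact ⟨ℓ, s, hs, fun z hz =>
    interior_subset (hball (closedBall_subset_ball (half_lt_self hε) hz))⟩

lemma forall_mem_of_forall_norm_eq_one {K : Set E}
    (hsmul : ∀ c : ℝ, 0 ≤ c → ∀ u ∈ K, c • u ∈ K) {P : E → Prop}
    (hP : ∀ c : ℝ, 0 < c → ∀ u, P u → P (c • u)) (h0 : P 0) (h : ∀ u ∈ K, ‖u‖ = 1 → P u) :
    ∀ u ∈ K, P u := by
  intro u hu
  rcases eq_or_ne u 0 with rfl | hu0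
  · exact h0
  have hpos := norm_pos_iff.2 hu0
  have := hP _ hpos _ (h _ (hsmul _ (inv_nonneg.2 hpos.le) u hu) (norm_smul_inv_norm hu0))
  rwa [smul_inv_smul₀ hpos.ne'] at this

def signedConeSubmonoid (K : ι → Set E) : Submonoid (E →L[ℝ] E) where
  carrier := {B | ∀ j, ∃ ℓ, ∃ s : ℝ, |s| = 1 ∧ ∀ v ∈ K j, s • B v ∈ K ℓ}
  one_mem' j := ⟨j, 1, abs_one, fun v hv => by simpa using hv⟩
  mul_mem' {A B} hA hB j := by
    obtain ⟨ℓ, s, hs, hBK⟩ := hB j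
    obtain ⟨ℓ', t, ht, hAK⟩ := hA ℓ
    refine ⟨ℓ', t * s, by rw [abs_mul, hs, ht, one_mul], fun v hv => ?_⟩
    simpa [smul_smul] using hAK _ (hBK v hv)

lemma mul_mul_opNorm_le_norm_apply {K : ι → Set E} {w : E} (hw : ‖w‖ = 1) {δ : ℝ} (hδ : 0 < δ)
    (hδK : ∀ j, ∀ u ∈ K j, δ * ‖u‖ ≤ ⟪u, w⟫) {B : E →L[ℝ] E} (hB : B ∈ signedConeSubmonoid K)
    {x : E} {ρ s : ℝ} (hρ : 0 < ρ) (hs : |s| = 1) {ℓ : ι}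
    (hx : ∀ z ∈ closedBall x ρ, s • z ∈ K ℓ) : ρ * δ * ‖B‖ ≤ ‖B x‖ := by
  obtain ⟨ℓ', t, ht, hBK⟩ := hB ℓ
  have hts : |t * s| = 1 := by rw [abs_mul, ht, hs, one_mul]
  calc ρ * δ * ‖B‖ ≤ ((t * s) • innerSL ℝ w) (B x) := by
        refine mul_mul_opNorm_le_of_forall_mem_closedBall B _ hρ hδ fun z hz => ?_
        have := hδK ℓ' _ (hBK _ (hx z hz))
        rw [map_smul, smul_smul, norm_smul, Real.norm_eq_abs, hts, one_mul,
          real_inner_smul_left] at this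
        simpa [real_inner_comm] using this
    _ ≤ |⟪w, B x⟫| := by
        simpa [abs_mul, hts] using le_abs_self ((t * s) * ⟪w, B x⟫)
    _ ≤ ‖B x‖ := by simpa [hw] using abs_real_inner_le_norm w (B x)

lemma mul_opNorm_mul_norm_le_abs_inner {K : ι → Set E} {w : E} {δ τ : ℝ}
    (hδK : ∀ j, ∀ u ∈ K j, δ * ‖u‖ ≤ ⟪u, w⟫) (hδ : 0 ≤ δ) {B : E →L[ℝ] E}
    (hB : B ∈ signedConeSubmonoid K) (hτ : ∀ j, ∀ u ∈ K j, τ * ‖B‖ * ‖u‖ ≤ ‖B u‖) {j : ι}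
    {u : E} (hu : u ∈ K j) : δ * τ * ‖B‖ * ‖u‖ ≤ |⟪B u, w⟫| := by
  obtain ⟨ℓ, t, ht, hBK⟩ := hB j
  have h := hδK ℓ _ (hBK u hu)
  rw [norm_smul, Real.norm_eq_abs, ht, one_mul, real_inner_smul_left] at h
  calc δ * τ * ‖B‖ * ‖u‖ = δ * (τ * ‖B‖ * ‖u‖) := by ring
    _ ≤ δ * ‖B u‖ := mul_le_mul_of_nonneg_left (hτ j u hu) hδ
    _ ≤ |t * ⟪B u, w⟫| := h.trans (le_abs_self _)
    _ = |⟪B u, w⟫| := by rw [abs_mul, ht, one_mul]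

/-- Conditions (i) and (ii) in the definition of a multicone. -/
structure IsTransverseConeFamily (K : ι → Set E) (w : E) : Prop where
  isClosed : ∀ j, IsClosed (K j)
  convex : ∀ j, Convex ℝ (K j)
  interior_nonempty : ∀ j, (interior (K j)).Nonempty
  smul_mem : ∀ j, ∀ c : ℝ, 0 ≤ c → ∀ u ∈ K j, c • u ∈ K j
  norm_eq_one : ‖w‖ = 1
  inner_pos : ∀ j, ∀ u ∈ K j, u ≠ 0 → 0 < ⟪u, w⟫

/-- Condition (iii) in the definition of a multicone. -/
def MapsIntoSignedInteriors (K : ι → Set E) (A : E →L[ℝ] E) : Prop :=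
  ∀ j, ∃ ℓ, ∀ u ∈ K j, u ≠ 0 → A u ∈ interior (K ℓ) ∨ -A u ∈ interior (K ℓ)

namespace IsTransverseConeFamily

variable {K : ι → Set E} {w : E}

lemma zero_notMem_interior (hK : IsTransverseConeFamily K w) (j : ι) :
    (0 : E) ∉ interior (K j) := by
  intro h0
  obtain ⟨ε, hε, hball⟩ := Metric.mem_nhds_iff.1 (mem_interior_iff_mem_nhds.1 h0)
  have hw : w ≠ 0 := norm_ne_zero_iff.1 (by rw [hK.norm_eq_one]; exact one_ne_zero)
  have hmem : -(ε / 2) • w ∈ K j :=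
    hball (by simp [norm_smul, hK.norm_eq_one, abs_of_pos hε, hε])
  have := hK.inner_pos j _ hmem (smul_ne_zero (by linarith) hw)
  rw [real_inner_smul_left, real_inner_self_eq_norm_sq, hK.norm_eq_one] at this
  linarith

lemma disjoint_interior_neg (hK : IsTransverseConeFamily K w) (j : ι) :
    Disjoint (interior (K j)) (-interior (K j)) := by
  refine Set.disjoint_left.2 fun x hx hx' => ?_
  have hx0 : x ≠ 0 := fun h => hK.zero_notMem_interior j (h ▸ hx)
  have h1 := hK.inner_pos j x (interior_subset hx) hx0
  have h2 := hK.inner_pos j (-x) (interior_subset hx') (neg_ne_zero.2 hx0)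
  rw [inner_neg_left] at h2
  linarith

lemma convex_diff_zero (hK : IsTransverseConeFamily K w) (j : ι) : Convex ℝ (K j \ {0}) := by
  have : K j \ {0} = K j ∩ innerSL ℝ w ⁻¹' Ioi 0 := by
    ext u
    simp only [mem_sdiff, mem_singleton_iff, mem_inter_iff, mem_preimage, innerSL_apply_apply,
      mem_Ioi, real_inner_comm u]
    exact ⟨fun h => ⟨h.1, hK.inner_pos j u h.1 h.2⟩,
      fun h => ⟨h.1, fun hu => by simp [hu] at h⟩⟩
  rw [this]
  exact (hK.convex j).inter ((convex_Ioi 0).linear_preimage (innerSL ℝ w).toLinearMap)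

lemma mem_signedConeSubmonoid (hK : IsTransverseConeFamily K w) {A : E →L[ℝ] E}
    (hA : MapsIntoSignedInteriors K A) : A ∈ signedConeSubmonoid K := by
  intro j
  obtain ⟨ℓ, hAj⟩ := hA j
  have hcover : K j \ {0} ⊆ A ⁻¹' interior (K ℓ) ∪ A ⁻¹' (-interior (K ℓ)) :=
    fun u hu => hAj u hu.1 hu.2
  have hsign := (hK.convex_diff_zero j).isPreconnected.subset_or_subset
    (isOpen_interior.preimage A.continuous) (isOpen_interior.neg.preimage A.continuous)
    ((hK.disjoint_interior_neg ℓ).preimage A) hcover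
  have hzero : (0 : E) ∈ K ℓ := by
    obtain ⟨x, hx⟩ := hK.interior_nonempty ℓ
    simpa using hK.smul_mem ℓ 0 le_rfl x (interior_subset hx)
  have hmem : ∀ s : ℝ, (∀ u ∈ K j \ {0}, s • A u ∈ interior (K ℓ)) →
      ∀ u ∈ K j, s • A u ∈ K ℓ := by
    intro s hs u hu
    rcases eq_or_ne u 0 with rfl | hu0
    · simpa using hzero
    · exact interior_subset (hs u ⟨hu, hu0⟩)
  rcases hsign with h | h
  · exact ⟨ℓ, 1, abs_one, hmem 1 fun u hu => by simpa using h hu⟩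
  · exact ⟨ℓ, -1, by simp, hmem (-1) fun u hu => by simpa using h hu⟩

lemma closure_le_signedConeSubmonoid (hK : IsTransverseConeFamily K w)
    {S : Set (E →L[ℝ] E)} (hSK : ∀ A ∈ S, MapsIntoSignedInteriors K A) :
    Submonoid.closure S ≤ signedConeSubmonoid K :=
  Submonoid.closure_le.2 fun A hA => hK.mem_signedConeSubmonoid (hSK A hA)

lemma isCompact_iUnion_inter_sphere [Finite ι] [ProperSpace E]
    (hK : IsTransverseConeFamily K w) : IsCompact ((⋃ j, K j) ∩ sphere 0 1) :=
  (isCompact_sphere 0 1).inter_left (isClosed_iUnion_of_finite hK.isClosed)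

lemma exists_pos_mul_norm_le_inner [Finite ι] [ProperSpace E]
    (hK : IsTransverseConeFamily K w) : ∃ δ > 0, ∀ j, ∀ u ∈ K j, δ * ‖u‖ ≤ ⟪u, w⟫ := by
  obtain ⟨δ, hδ, hδC⟩ := hK.isCompact_iUnion_inter_sphere.exists_forall_le'
    (f := fun u => ⟪u, w⟫) (continuous_id.inner continuous_const).continuousOn (a := 0)
    fun u ⟨hu, hu1⟩ => by
      obtain ⟨j, hj⟩ := mem_iUnion.1 hu
      exact hK.inner_pos j u hj (ne_zero_of_mem_unit_sphere ⟨u, hu1⟩)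
  refine ⟨δ, hδ, fun j => forall_mem_of_forall_norm_eq_one (hK.smul_mem j) ?_ (by simp)
    fun u hu hu1 => ?_⟩
  · intro c hc u hu
    rw [norm_smul, real_inner_smul_left, Real.norm_of_nonneg hc.le, mul_left_comm]
    exact mul_le_mul_of_nonneg_left hu hc.le
  · simpa [hu1] using hδC u ⟨mem_iUnion.2 ⟨j, hu⟩, by simpa using hu1⟩

lemma exists_forall_closedBall_apply_smul_mem [Finite ι] [ProperSpace E]
    (hK : IsTransverseConeFamily K w) {S : Set (E →L[ℝ] E)} (hS : IsCompact S)
    (hSK : ∀ A ∈ S, MapsIntoSignedInteriors K A) :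
    ∃ ρ > 0, ∀ A ∈ S, ∀ j, ∀ u ∈ K j, ‖u‖ = 1 →
      ∃ ℓ, ∃ s : ℝ, |s| = 1 ∧ ∀ z ∈ closedBall (A u) ρ, s • z ∈ K ℓ := by
  set C := (⋃ j, K j) ∩ sphere (0 : E) 1
  have hsign : ∀ x ∈ (fun p : (E →L[ℝ] E) × E => p.1 p.2) '' (S ×ˢ C),
      ∃ ℓ, ∃ s : ℝ, |s| = 1 ∧ s • x ∈ interior (K ℓ) := by
    rintro _ ⟨⟨A, u⟩, ⟨hA, hu, hu1⟩, rfl⟩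
    obtain ⟨j, hj⟩ := mem_iUnion.1 hu
    obtain ⟨ℓ, hAj⟩ := hSK A hA j
    rcases hAj u hj (ne_zero_of_mem_unit_sphere ⟨u, hu1⟩) with h | h
    · exact ⟨ℓ, 1, abs_one, by simpa using h⟩
    · exact ⟨ℓ, -1, by simp, by simpa using h⟩
  obtain ⟨ρ, hρ, hball⟩ := exists_forall_closedBall_smul_mem K
    ((hS.prod hK.isCompact_iUnion_inter_sphere).image
      (continuous_fst.clm_apply continuous_snd)) hsign
  exact ⟨ρ, hρ, fun A hA j u hu hu1 =>
    hball _ ⟨(A, u), ⟨hA, mem_iUnion.2 ⟨j, hu⟩, by simpa using hu1⟩, rfl⟩⟩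

theorem exists_pos_mul_opNorm_mul_norm_le [Finite ι] [ProperSpace E]
    (hK : IsTransverseConeFamily K w) {S : Set (E →L[ℝ] E)} (hS : IsCompact S)
    (hSK : ∀ A ∈ S, MapsIntoSignedInteriors K A) :
    ∃ τ > 0, ∀ A ∈ Subsemigroup.closure S, ∀ j, ∀ u ∈ K j, τ * ‖A‖ * ‖u‖ ≤ ‖A u‖ := by
  obtain ⟨δ, hδ, hδK⟩ := hK.exists_pos_mul_norm_le_inner
  obtain ⟨ρ, hρ, hball⟩ := hK.exists_forall_closedBall_apply_smul_mem hS hSK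
  obtain ⟨M, hM⟩ := hS.isBounded.exists_norm_le
  have hM₁ : 0 < max M 1 := lt_max_of_lt_right one_pos
  refine ⟨ρ * δ / max M 1, by positivity, fun A hA j => ?_⟩
  obtain ⟨B, hB, a, ha, rfl⟩ := Subsemigroup.exists_mul_of_mem_closure hA
  refine forall_mem_of_forall_norm_eq_one (hK.smul_mem j) (fun c hc u hu => ?_) (by simp)
    fun u hu hu1 => ?_
  · rw [norm_smul, map_smul, norm_smul, Real.norm_of_nonneg hc.le, mul_left_comm]
    exact mul_le_mul_of_nonneg_left hu hc.le
  obtain ⟨ℓ, s, hs, hx⟩ := hball a ha j u hu hu1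
  have hBa : ‖B * a‖ ≤ ‖B‖ * max M 1 :=
    (norm_mul_le B a).trans (by gcongr; exact (hM a ha).trans (le_max_left M 1))
  calc ρ * δ / max M 1 * ‖B * a‖ * ‖u‖ ≤ ρ * δ / max M 1 * (‖B‖ * max M 1) := by
        rw [hu1, mul_one]; gcongr
    _ = ρ * δ * ‖B‖ := by field_simp
    _ ≤ ‖B (a u)‖ := mul_mul_opNorm_le_norm_apply hK.norm_eq_one hδ hδK
        (hK.closure_le_signedConeSubmonoid hSK hB) hρ hs hx

lemma mul_mul_opNorm_mul_opNorm_le [Nonempty ι] (hK : IsTransverseConeFamily K w) {τ : ℝ}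
    (hτ₀ : 0 ≤ τ) {T : Set (E →L[ℝ] E)} (hTK : T ⊆ signedConeSubmonoid K)
    (hτ : ∀ A ∈ T, ∀ j, ∀ u ∈ K j, τ * ‖A‖ * ‖u‖ ≤ ‖A u‖) {A₁ A₂ : E →L[ℝ] E}
    (hA₁ : A₁ ∈ T) (hA₂ : A₂ ∈ T) : τ * τ * ‖A₁‖ * ‖A₂‖ ≤ ‖A₁ * A₂‖ := by
  obtain ⟨j⟩ := ‹Nonempty ι›
  obtain ⟨x, hx⟩ := hK.interior_nonempty j
  have hx0 : 0 < ‖x‖ := norm_pos_iff.2 fun h => hK.zero_notMem_interior j (h ▸ hx)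
  obtain ⟨ℓ, t, ht, hA₂K⟩ := hTK hA₂ j
  have h₁ := hτ A₁ hA₁ ℓ _ (hA₂K x (interior_subset hx))
  rw [map_smul, norm_smul, norm_smul, Real.norm_eq_abs, ht, one_mul, one_mul] at h₁
  have h₂ := hτ A₂ hA₂ j x (interior_subset hx)
  have h₁₂ : τ * τ * ‖A₁‖ * ‖A₂‖ * ‖x‖ ≤ ‖(A₁ * A₂) x‖ :=
    calc τ * τ * ‖A₁‖ * ‖A₂‖ * ‖x‖ = τ * ‖A₁‖ * (τ * ‖A₂‖ * ‖x‖) := by ring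
      _ ≤ τ * ‖A₁‖ * ‖A₂ x‖ := by gcongr
      _ ≤ ‖(A₁ * A₂) x‖ := h₁
  exact le_of_mul_le_mul_right (h₁₂.trans ((A₁ * A₂).le_opNorm x)) hx0

theorem exists_uniform_bounds [Finite ι] [Nonempty ι] [ProperSpace E]
    (hK : IsTransverseConeFamily K w) {S : Set (E →L[ℝ] E)} (hS : IsCompact S)
    (hSK : ∀ A ∈ S, MapsIntoSignedInteriors K A) :
    ∃ τ₁ τ₂ τ₃ : ℝ, 0 < τ₁ ∧ 0 < τ₂ ∧ 0 < τ₃ ∧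
      (∀ A ∈ Subsemigroup.closure S, ∀ j, ∀ u ∈ K j, τ₁ * ‖A‖ * ‖u‖ ≤ ‖A u‖) ∧
      (∀ A ∈ Subsemigroup.closure S, ∀ j, ∀ u ∈ K j, τ₂ * ‖A‖ * ‖u‖ ≤ |⟪A u, w⟫|) ∧
      (∀ A₁ ∈ Subsemigroup.closure S, ∀ A₂ ∈ Subsemigroup.closure S,
        τ₃ * ‖A₁‖ * ‖A₂‖ ≤ ‖A₁ * A₂‖) := by
  obtain ⟨δ, hδ, hδK⟩ := hK.exists_pos_mul_norm_le_inner
  obtain ⟨τ, hτ, hτS⟩ := hK.exists_pos_mul_opNorm_mul_norm_le hS hSK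
  have hSK' : (Subsemigroup.closure S : Set (E →L[ℝ] E)) ⊆ signedConeSubmonoid K :=
    fun A hA => hK.closure_le_signedConeSubmonoid hSK
      (Subsemigroup.closure_le.2 Submonoid.subset_closure hA)
  exact ⟨τ, δ * τ, τ * τ, hτ, by positivity, by positivity, hτS,
    fun A hA j u hu => mul_opNorm_mul_norm_le_abs_inner hδK hδ.le (hSK' hA) (hτS A hA) hu,
    fun A₁ hA₁ A₂ hA₂ => hK.mul_mul_opNorm_mul_opNorm_le hτ.le hSK' hτS hA₁ hA₂⟩

end IsTransverseConeFamily

end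

lemma interior_preimage_euclideanSpaceEquiv {ι : Type*} (s : Set (ι → ℝ)) :
    interior (EuclideanSpace.equiv ι ℝ ⁻¹' s) = EuclideanSpace.equiv ι ℝ ⁻¹' interior s :=
  ((EuclideanSpace.equiv ι ℝ).toHomeomorph.preimage_interior s).symm

section

variable {ι : Type*} [Fintype ι]

lemma eucNorm_eq_norm_toLp (u : ι → ℝ) : eucNorm u = ‖toLp 2 u‖ := by
  simp [eucNorm, EuclideanSpace.norm_eq]

lemma sum_mul_eq_inner_toLp (u w : ι → ℝ) : ∑ i, u i * w i = ⟪toLp 2 u, toLp 2 w⟫ := by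
  simp [PiLp.inner_apply, mul_comm]

lemma IsMulticone.isTransverseConeFamily {m : ℕ} {S : Set (Matrix ι ι ℝ)}
    {K : Fin m → Set (ι → ℝ)} {w : ι → ℝ} (hK : IsMulticone S K w) :
    IsTransverseConeFamily (fun j => EuclideanSpace.equiv ι ℝ ⁻¹' K j) (toLp 2 w) := by
  obtain ⟨hclosed, hconv, hint, hsmul, hw, hpos, -, -⟩ := hK
  refine ⟨fun j => (hclosed j).preimage (EuclideanSpace.equiv ι ℝ).continuous,
    fun j => (hconv j).linear_preimage (EuclideanSpace.equiv ι ℝ).toLinearMap, fun j => ?_,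
    fun j c hc u hu => by simpa using hsmul j c hc _ hu, ?_, fun j u hu hu0 => ?_⟩
  · rw [interior_preimage_euclideanSpaceEquiv]
    exact (hint j).preimage (EuclideanSpace.equiv ι ℝ).surjective
  · simp [← eucNorm_eq_norm_toLp, eucNorm, hw]
  · simpa [sum_mul_eq_inner_toLp] using hpos (ofLp u) (mem_iUnion.2 ⟨j, hu⟩) (by simpa using hu0)

variable [DecidableEq ι]

lemma IsMulticone.mapsIntoSignedInteriors {m : ℕ} {S : Set (Matrix ι ι ℝ)}
    {K : Fin m → Set (ι → ℝ)} {w : ι → ℝ} (hK : IsMulticone S K w) {A : Matrix ι ι ℝ}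
    (hA : A ∈ S) :
    MapsIntoSignedInteriors (fun j => EuclideanSpace.equiv ι ℝ ⁻¹' K j)
      (Matrix.toEuclideanCLM (𝕜 := ℝ) A) := by
  intro j
  obtain ⟨ℓ, hℓ⟩ := hK.2.2.2.2.2.2.1 A hA j
  refine ⟨ℓ, fun u hu hu0 => ?_⟩
  simp only [interior_preimage_euclideanSpaceEquiv, mem_preimage]
  simpa [PiLp.coe_continuousLinearEquiv] using hℓ (ofLp u) hu (by simpa using hu0)

lemma opNorm_eq_norm_toEuclideanCLM (A : Matrix ι ι ℝ) :
    opNorm A = ‖Matrix.toEuclideanCLM (𝕜 := ℝ) A‖ := by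
  rw [← ContinuousLinearMap.sSup_sphere_eq_norm, opNorm,
    ← (WithLp.equiv 2 (ι → ℝ)).symm.surjective.image_preimage (sphere 0 1), image_image]
  congr 1
  ext
  simp [eucNorm_eq_norm_toLp]

lemma continuous_toEuclideanCLM : Continuous (Matrix.toEuclideanCLM (n := ι) (𝕜 := ℝ)) :=
  LinearMap.continuous_of_finiteDimensional
    (Matrix.toEuclideanCLM (n := ι) (𝕜 := ℝ)).toAlgEquiv.toLinearMap

lemma semigroupOf_subset_closure (S : Set (Matrix ι ι ℝ)) :
    semigroupOf S ⊆ Subsemigroup.closure S := by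
  rintro _ ⟨l, hl, hlS, rfl⟩
  induction l with
  | nil => exact absurd rfl hl
  | cons a t ih =>
    rw [List.prod_cons]
    rcases eq_or_ne t [] with rfl | ht
    · simpa using Subsemigroup.subset_closure (hlS a (by simp))
    · exact mul_mem (Subsemigroup.subset_closure (hlS a (by simp)))
        (ih ht fun M hM => hlS M (by simp [hM]))

lemma toEuclideanCLM_mem_closure {S : Set (Matrix ι ι ℝ)} {A : Matrix ι ι ℝ}
    (hA : A ∈ Subsemigroup.closure S) : Matrix.toEuclideanCLM (𝕜 := ℝ) A ∈
      Subsemigroup.closure (Matrix.toEuclideanCLM (𝕜 := ℝ) '' S) := by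
  induction hA using Subsemigroup.closure_induction with
  | mem a ha => exact Subsemigroup.subset_closure (mem_image_of_mem _ ha)
  | mul x y _ _ hx hy => rw [map_mul]; exact mul_mem hx hy

end

theorem stmt4_general {d m : ℕ} (hm : 0 < m)
    (S : Set (Matrix (Fin d) (Fin d) ℝ)) (hScpt : IsCompact S)
    (K : Fin m → Set (Fin d → ℝ)) (w : Fin d → ℝ) (hK : IsMulticone S K w) :
    ∃ τ₁ τ₂ τ₃ : ℝ, 0 < τ₁ ∧ 0 < τ₂ ∧ 0 < τ₃ ∧
      (∀ u ∈ ⋃ j, K j, ∀ A ∈ semigroupOf S,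
        τ₁ * opNorm A * eucNorm u ≤ eucNorm (A.mulVec u)) ∧
      (∀ u ∈ ⋃ j, K j, ∀ A ∈ semigroupOf S,
        τ₂ * opNorm A * eucNorm u ≤ |∑ i, A.mulVec u i * w i|) ∧
      (∀ A₁ ∈ semigroupOf S, ∀ A₂ ∈ semigroupOf S,
        τ₃ * opNorm A₁ * opNorm A₂ ≤ opNorm (A₁ * A₂)) := by
  have : Nonempty (Fin m) := ⟨⟨0, hm⟩⟩
  obtain ⟨τ₁, τ₂, τ₃, h₁, h₂, h₃, hi, hii, hiii⟩ :=
    hK.isTransverseConeFamily.exists_uniform_bounds (hScpt.image continuous_toEuclideanCLM)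
      fun _ ⟨A, hA, hA'⟩ => hA' ▸ hK.mapsIntoSignedInteriors hA
  have hcl : ∀ A ∈ semigroupOf S, Matrix.toEuclideanCLM (𝕜 := ℝ) A ∈
      Subsemigroup.closure (Matrix.toEuclideanCLM (𝕜 := ℝ) '' S) :=
    fun A hA => toEuclideanCLM_mem_closure (semigroupOf_subset_closure S hA)
  have hmem : ∀ {u j}, u ∈ K j → toLp 2 u ∈ EuclideanSpace.equiv (Fin d) ℝ ⁻¹' K j :=
    fun hu => by simpa [PiLp.coe_continuousLinearEquiv] using hu
  refine ⟨τ₁, τ₂, τ₃, h₁, h₂, h₃, fun u hu A hA => ?_, fun u hu A hA => ?_,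
    fun A₁ hA₁ A₂ hA₂ => ?_⟩
  · obtain ⟨j, hj⟩ := mem_iUnion.1 hu
    simpa [eucNorm_eq_norm_toLp, opNorm_eq_norm_toEuclideanCLM] using
      hi _ (hcl A hA) j _ (hmem hj)
  · obtain ⟨j, hj⟩ := mem_iUnion.1 hu
    simpa [eucNorm_eq_norm_toLp, opNorm_eq_norm_toEuclideanCLM, sum_mul_eq_inner_toLp] using
      hii _ (hcl A hA) j _ (hmem hj)
  · simpa [opNorm_eq_norm_toEuclideanCLM] using
      hiii _ (hcl A₁ hA₁) _ (hcl A₂ hA₂)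

/-- Proposition 3.4: uniform lower bounds on the growth of vectors in the multicone and
reverse submultiplicativity of the operator norm on the generated semigroup. -/
theorem stmt4 {d m : ℕ} (hm : 0 < m)
    (S : Set (Matrix (Fin d) (Fin d) ℝ)) (hSne : S.Nonempty) (hScpt : IsCompact S)
    (K : Fin m → Set (Fin d → ℝ)) (w : Fin d → ℝ) (hK : IsMulticone S K w) :
    ∃ τ₁ τ₂ τ₃ : ℝ, 0 < τ₁ ∧ 0 < τ₂ ∧ 0 < τ₃ ∧
      (∀ u ∈ ⋃ j, K j, ∀ A ∈ semigroupOf S,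
        τ₁ * opNorm A * eucNorm u ≤ eucNorm (A.mulVec u)) ∧
      (∀ u ∈ ⋃ j, K j, ∀ A ∈ semigroupOf S,
        τ₂ * opNorm A * eucNorm u ≤ |∑ i, A.mulVec u i * w i|) ∧
      (∀ A₁ ∈ semigroupOf S, ∀ A₂ ∈ semigroupOf S,
        τ₃ * opNorm A₁ * opNorm A₂ ≤ opNorm (A₁ * A₂)) :=
  stmt4_general hm S hScpt K w hK
end

section
/- Let d ≥ 1 and let 𝖠 ⊆ M_d(ℝ) be compact and nonempty with a multicone (K_1,…,K_m) and transverse-defining vector w, and let Ω := {z ∈ ℂ^d : z ∈ ∪_{j=1}^m int(K_j^ℂ) and ⟨z,w⟩ = 1} with Āz := ⟨Az,w⟩^{-1} Az for A ∈ 𝒮(𝖠). Then the set ∪_{A ∈ 𝒮(𝖠)} Ā(Ω) is compactly contained in Ω: its closure in ℂ^d is a compact set contained in the interior of Ω relative to the hyperplane {z ∈ ℂ^d : ⟨z,w⟩ = 1}. -/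
open scoped BigOperators Pointwise

/-!
A nonzero element of `complexify K` can be written `c • (u + i v)` with `u, v ∈ K` both nonzero.
A matrix `A ∈ S` sends `u` and `v` into `± interior (K ℓ)`, and the signs are absorbed by the
scalars `±1, ±i`; so `A` maps `complexify (K j) \ {0}` into `interior (complexify (K ℓ))`.
On `complexify K \ {0}` the pairing with `w` never vanishes: the real part of `⟨u + i v, w⟩` is
`⟨u, w⟩ > 0`.

Every point of `complexify K \ {0}` is a nonzero multiple of a point of the compact set
`{u + i v : u, v ∈ K, max ‖u‖ ‖v‖ = 1}`. Writing `B ∈ semigroupOf S` as `M * C` with `M ∈ S`,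
the projection of `B z` onto the hyperplane `⟨·, w⟩ = 1` is that of `M x` for such a point `x`.
Hence all of these projections lie in the continuous image of a product of compact sets, which is a
compact subset of `Ω`, and `Ω` is open in the hyperplane.
-/

open scoped Matrix Topology

noncomputable section

variable {ι : Type*}

def ofReIm (u v : ι → ℝ) : ι → ℂ := fun i => (u i : ℂ) + Complex.I * v i

lemma ofReIm_re_im (z : ι → ℂ) : ofReIm (fun i => (z i).re) (fun i => (z i).im) = z := by
  funext i; simp [ofReIm, mul_comm Complex.I, Complex.re_add_im]

lemma ofReIm_eq_zero_iff {u v : ι → ℝ} : ofReIm u v = 0 ↔ u = 0 ∧ v = 0 := by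
  refine ⟨fun h => ⟨funext fun i => ?_, funext fun i => ?_⟩, ?_⟩
  · simpa [ofReIm] using congrArg (fun z => (z i).re) h
  · simpa [ofReIm] using congrArg (fun z => (z i).im) h
  · rintro ⟨rfl, rfl⟩
    funext i
    simp [ofReIm]

lemma ofReIm_smul (t : ℝ) (u v : ι → ℝ) : ofReIm (t • u) (t • v) = (t : ℂ) • ofReIm u v := by
  funext i; simp [ofReIm]; ring

lemma ofReIm_neg (u v : ι → ℝ) : ofReIm (-u) (-v) = -ofReIm u v := by
  simpa using ofReIm_smul (-1) u v

lemma ofReIm_neg_left (u v : ι → ℝ) : ofReIm (-u) v = Complex.I • ofReIm v u := by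
  funext i; simp only [ofReIm, Pi.neg_apply, Pi.smul_apply, smul_eq_mul, Complex.ofReal_neg]
  linear_combination -(u i : ℂ) * Complex.I_sq

lemma ofReIm_neg_right (u v : ι → ℝ) : ofReIm u (-v) = -Complex.I • ofReIm v u := by
  funext i; simp only [ofReIm, Pi.neg_apply, Pi.smul_apply, smul_eq_mul, Complex.ofReal_neg]
  linear_combination (u i : ℂ) * Complex.I_sq

lemma one_add_I_ne_zero : 1 + Complex.I ≠ 0 := by
  intro h; simpa using congrArg Complex.re h

lemma one_sub_I_ne_zero : 1 - Complex.I ≠ 0 := by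
  intro h; simpa using congrArg Complex.re h

lemma ofReIm_zero_right (u : ι → ℝ) : ofReIm u 0 = (1 + Complex.I)⁻¹ • ofReIm u u := by
  have := one_add_I_ne_zero
  funext i; simp [ofReIm]; field_simp

lemma re_sum_ofReIm_mul [Fintype ι] (u v w : ι → ℝ) :
    (∑ i, ofReIm u v i * (w i : ℂ)).re = u ⬝ᵥ w := by
  simp [ofReIm, Complex.re_sum, dotProduct]

lemma continuous_ofReIm : Continuous fun p : (ι → ℝ) × (ι → ℝ) => ofReIm p.1 p.2 := by
  unfold ofReIm; fun_prop

lemma mulVecC_ofReIm [Fintype ι] (A : Matrix ι ι ℝ) (u v : ι → ℝ) :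
    mulVecC A (ofReIm u v) = ofReIm (A *ᵥ u) (A *ᵥ v) := by
  funext i
  simp [mulVecC, ofReIm, Matrix.mulVec, dotProduct, mul_add, Finset.sum_add_distrib,
    Finset.mul_sum, mul_left_comm Complex.I]

lemma mulVecC_mul [Fintype ι] (A B : Matrix ι ι ℝ) (z : ι → ℂ) :
    mulVecC (A * B) z = mulVecC A (mulVecC B z) := by
  simp only [mulVecC, Matrix.mulVec_mulVec]
  exact congrArg (· *ᵥ z) (Matrix.map_mul (f := Complex.ofRealHom))

lemma mulVecC_one [Fintype ι] [DecidableEq ι] (z : ι → ℂ) : mulVecC 1 z = z := by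
  simp [mulVecC, Matrix.map_one]

lemma mulVecC_smul [Fintype ι] (A : Matrix ι ι ℝ) (a : ℂ) (z : ι → ℂ) :
    mulVecC A (a • z) = a • mulVecC A z := Matrix.mulVec_smul _ _ _

lemma continuous_mulVecC [Fintype ι] :
    Continuous fun p : Matrix ι ι ℝ × (ι → ℂ) => mulVecC p.1 p.2 := by
  unfold mulVecC
  exact (continuous_fst.matrix_map Complex.continuous_ofReal).matrix_mulVec continuous_snd

lemma mem_complexify_iff {K : Set (ι → ℝ)} {z : ι → ℂ} :
    z ∈ complexify K ↔ ∃ (c : ℂ) (u v : ι → ℝ), u ∈ K ∧ v ∈ K ∧ z = c • ofReIm u v := by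
  -- `(u + v) + i (u - v) = (1 - i) (v + i u)`
  have key : ∀ (c : ℂ) (u v : ι → ℝ),
      (fun i => c * (((u i : ℂ) + v i) + Complex.I * ((u i : ℂ) - v i))) =
        (c * (1 - Complex.I)) • ofReIm v u := by
    intro c u v; funext i; simp only [ofReIm, Pi.smul_apply, smul_eq_mul]
    linear_combination (c * u i) * Complex.I_sq
  constructor
  · rintro ⟨c, u, v, hu, hv, rfl⟩
    exact ⟨_, v, u, hv, hu, key c u v⟩
  · rintro ⟨c, u, v, hu, hv, rfl⟩
    refine ⟨c / (1 - Complex.I), v, u, hv, hu, ?_⟩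
    rw [key, div_mul_cancel₀ _ one_sub_I_ne_zero]

lemma ofReIm_mem_complexify {K : Set (ι → ℝ)} {u v : ι → ℝ} (hu : u ∈ K) (hv : v ∈ K) :
    ofReIm u v ∈ complexify K :=
  mem_complexify_iff.2 ⟨1, u, v, hu, hv, (one_smul _ _).symm⟩

lemma smul_mem_complexify {K : Set (ι → ℝ)} {z : ι → ℂ} (a : ℂ) (hz : z ∈ complexify K) :
    a • z ∈ complexify K := by
  obtain ⟨c, u, v, hu, hv, rfl⟩ := mem_complexify_iff.1 hz
  exact mem_complexify_iff.2 ⟨a * c, u, v, hu, hv, smul_smul _ _ _⟩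

lemma smul_mem_interior_complexify {K : Set (ι → ℝ)} {z : ι → ℂ} {a : ℂ} (ha : a ≠ 0)
    (hz : z ∈ interior (complexify K)) : a • z ∈ interior (complexify K) := by
  have hsub : a • complexify K ⊆ complexify K := by
    rintro _ ⟨y, hy, rfl⟩; exact smul_mem_complexify a hy
  exact interior_mono hsub ((interior_smul₀ ha (complexify K)).symm ▸ Set.smul_mem_smul_set hz)

lemma ofReIm_mem_interior_complexify {K : Set (ι → ℝ)} {u v : ι → ℝ}
    (hu : u ∈ interior K) (hv : v ∈ interior K) : ofReIm u v ∈ interior (complexify K) := by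
  have hopen : IsOpen {z : ι → ℂ | (fun i => (z i).re) ∈ interior K ∧
      (fun i => (z i).im) ∈ interior K} :=
    (isOpen_interior.preimage (by fun_prop)).inter (isOpen_interior.preimage (by fun_prop))
  refine interior_maximal (fun z hz => ?_) hopen ?_
  · rw [← ofReIm_re_im z]
    exact ofReIm_mem_complexify (interior_subset hz.1) (interior_subset hz.2)
  · simpa [ofReIm] using And.intro hu hv

lemma ofReIm_mem_interior_complexify_of_or_neg {K : Set (ι → ℝ)} {u v : ι → ℝ}
    (hu : u ∈ interior K ∨ -u ∈ interior K) (hv : v ∈ interior K ∨ -v ∈ interior K) :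
    ofReIm u v ∈ interior (complexify K) := by
  rcases hu with hu | hu <;> rcases hv with hv | hv
  · exact ofReIm_mem_interior_complexify hu hv
  · rw [← neg_neg v, ofReIm_neg_right]
    exact smul_mem_interior_complexify (by simp) (ofReIm_mem_interior_complexify hv hu)
  · rw [← neg_neg u, ofReIm_neg_left]
    exact smul_mem_interior_complexify Complex.I_ne_zero (ofReIm_mem_interior_complexify hv hu)
  · rw [← neg_neg u, ← neg_neg v, ofReIm_neg, ← neg_one_smul ℂ]
    exact smul_mem_interior_complexify (by simp) (ofReIm_mem_interior_complexify hu hv)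

lemma exists_smul_ofReIm_of_mem_complexify {K : Set (ι → ℝ)} {z : ι → ℂ}
    (hz : z ∈ complexify K) (hz0 : z ≠ 0) :
    ∃ (c : ℂ) (u v : ι → ℝ), c ≠ 0 ∧ u ∈ K ∧ v ∈ K ∧ u ≠ 0 ∧ v ≠ 0 ∧ z = c • ofReIm u v := by
  obtain ⟨c, u, v, hu, hv, rfl⟩ := mem_complexify_iff.1 hz
  have hc : c ≠ 0 := by rintro rfl; exact hz0 (zero_smul _ _)
  have huv : ¬(u = 0 ∧ v = 0) := fun h => hz0 (by rw [ofReIm_eq_zero_iff.2 h, smul_zero])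
  by_cases hu0 : u = 0
  · have hv0 : v ≠ 0 := fun hv0 => huv ⟨hu0, hv0⟩
    refine ⟨c * Complex.I * (1 + Complex.I)⁻¹, v, v, by simp [hc, one_add_I_ne_zero], hv, hv,
      hv0, hv0, ?_⟩
    rw [hu0, ← neg_zero, ofReIm_neg_left, ofReIm_zero_right, smul_smul, smul_smul, mul_assoc]
  by_cases hv0 : v = 0
  · refine ⟨c * (1 + Complex.I)⁻¹, u, u, by simp [hc, one_add_I_ne_zero], hu, hu, hu0, hu0, ?_⟩
    rw [hv0, ofReIm_zero_right, smul_smul]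
  exact ⟨c, u, v, hc, hu, hv, hu0, hv0, rfl⟩

lemma sum_mul_ne_zero_of_mem_complexify [Fintype ι] {K : Set (ι → ℝ)} {w : ι → ℝ}
    (hpos : ∀ u ∈ K, u ≠ 0 → 0 < u ⬝ᵥ w) {z : ι → ℂ} (hz : z ∈ complexify K) (hz0 : z ≠ 0) :
    ∑ i, z i * (w i : ℂ) ≠ 0 := by
  obtain ⟨c, u, v, hc, hu, -, hu0, -, rfl⟩ := exists_smul_ofReIm_of_mem_complexify hz hz0
  have hre : (∑ i, ofReIm u v i * (w i : ℂ)).re ≠ 0 := by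
    rw [re_sum_ofReIm_mul]; exact (hpos u hu hu0).ne'
  simp only [Pi.smul_apply, smul_eq_mul, mul_assoc, ← Finset.mul_sum]
  exact mul_ne_zero hc fun h => hre (by rw [h, Complex.zero_re])

lemma zero_notMem_interior_of_dotProduct_pos [Fintype ι] {K : Set (ι → ℝ)} {w : ι → ℝ}
    (hpos : ∀ u ∈ K, u ≠ 0 → 0 < u ⬝ᵥ w) (hw : w ≠ 0) : (0 : ι → ℝ) ∉ interior K := by
  intro h0
  have hnear : ∀ᶠ t : ℝ in 𝓝[>] 0, -t • w ∈ K := by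
    have : Filter.Tendsto (fun t : ℝ => -t • w) (𝓝 0) (𝓝 0) :=
      (by fun_prop : Continuous fun t : ℝ => -t • w).tendsto' 0 0 (by simp)
    exact nhdsWithin_le_nhds (this.eventually (mem_interior_iff_mem_nhds.1 h0))
  obtain ⟨t, htK, ht⟩ := (hnear.and self_mem_nhdsWithin).exists
  have hww : 0 < w ⬝ᵥ w := (Finset.sum_nonneg fun i _ => mul_self_nonneg (w i)).lt_of_ne
    (Ne.symm (mt dotProduct_self_eq_zero.1 hw))
  have := hpos _ htK (smul_ne_zero (neg_ne_zero.2 (ne_of_gt ht)) hw)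
  rw [smul_dotProduct, smul_eq_mul] at this
  nlinarith [mul_pos (show (0:ℝ) < t from ht) hww]

lemma mulVecC_mem_interior_complexify [Fintype ι] {K L : Set (ι → ℝ)} {A : Matrix ι ι ℝ}
    (hA : ∀ u ∈ K, u ≠ 0 → A *ᵥ u ∈ interior L ∨ -(A *ᵥ u) ∈ interior L)
    (hL : (0 : ι → ℝ) ∉ interior L) {z : ι → ℂ} (hz : z ∈ complexify K) (hz0 : z ≠ 0) :
    mulVecC A z ∈ interior (complexify L) ∧ mulVecC A z ≠ 0 := by
  obtain ⟨c, u, v, hc, hu, hv, hu0, hv0, rfl⟩ := exists_smul_ofReIm_of_mem_complexify hz hz0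
  have hAu := hA u hu hu0
  have hAu0 : A *ᵥ u ≠ 0 := by
    intro h; rw [h, neg_zero, or_self] at hAu; exact hL hAu
  rw [mulVecC_smul, mulVecC_ofReIm]
  exact ⟨smul_mem_interior_complexify hc
      (ofReIm_mem_interior_complexify_of_or_neg hAu (hA v hv hv0)),
    smul_ne_zero hc (mt ofReIm_eq_zero_iff.1 fun h => hAu0 h.1)⟩

def unitComplexify [Fintype ι] (K : Set (ι → ℝ)) : Set (ι → ℂ) :=
  (fun p : (ι → ℝ) × (ι → ℝ) => ofReIm p.1 p.2) '' (K ×ˢ K ∩ Metric.sphere 0 1)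

lemma isCompact_unitComplexify [Fintype ι] {K : Set (ι → ℝ)} (hK : IsClosed K) :
    IsCompact (unitComplexify K) :=
  ((isCompact_sphere 0 1).inter_left (hK.prod hK)).image continuous_ofReIm

lemma unitComplexify_subset [Fintype ι] (K : Set (ι → ℝ)) :
    unitComplexify K ⊆ complexify K \ {0} := by
  rintro _ ⟨⟨u, v⟩, ⟨⟨hu, hv⟩, huv⟩, rfl⟩
  refine ⟨ofReIm_mem_complexify hu hv, fun h => ?_⟩
  obtain ⟨rfl, rfl⟩ := ofReIm_eq_zero_iff.1 h
  simp at huv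

lemma exists_smul_mem_unitComplexify [Fintype ι] {K : Set (ι → ℝ)}
    (hcone : ∀ c : ℝ, 0 ≤ c → ∀ u ∈ K, c • u ∈ K) {z : ι → ℂ} (hz : z ∈ complexify K)
    (hz0 : z ≠ 0) : ∃ c : ℂ, c ≠ 0 ∧ ∃ x ∈ unitComplexify K, z = c • x := by
  obtain ⟨c, u, v, hc, hu, hv, hu0, -, rfl⟩ := exists_smul_ofReIm_of_mem_complexify hz hz0
  set t := ‖(u, v)‖
  have ht : 0 < t := norm_pos_iff.2 fun h : (u, v) = 0 => hu0 (congrArg Prod.fst h)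
  refine ⟨c * t, mul_ne_zero hc (Complex.ofReal_ne_zero.2 ht.ne'), ofReIm (t⁻¹ • u) (t⁻¹ • v),
    ⟨t⁻¹ • (u, v), ⟨⟨hcone _ (inv_nonneg.2 ht.le) u hu, hcone _ (inv_nonneg.2 ht.le) v hv⟩, ?_⟩,
      rfl⟩, ?_⟩
  · rw [mem_sphere_zero_iff_norm, norm_smul, norm_inv, Real.norm_of_nonneg ht.le,
      inv_mul_cancel₀ ht.ne']
  · rw [ofReIm_smul, smul_smul, mul_assoc, Complex.ofReal_inv, mul_inv_cancel₀
      (Complex.ofReal_ne_zero.2 ht.ne'), mul_one]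

def centralProj [Fintype ι] (w : ι → ℝ) (z : ι → ℂ) : ι → ℂ := (∑ i, z i * (w i : ℂ))⁻¹ • z

lemma centralProj_smul [Fintype ι] (w : ι → ℝ) {a : ℂ} (ha : a ≠ 0) (z : ι → ℂ) :
    centralProj w (a • z) = centralProj w z := by
  simp only [centralProj, Pi.smul_apply, smul_eq_mul, mul_assoc, ← Finset.mul_sum, smul_smul,
    mul_inv_rev, inv_mul_cancel_right₀ ha]

lemma sum_centralProj_mul [Fintype ι] (w : ι → ℝ) {z : ι → ℂ} (hz : ∑ i, z i * (w i : ℂ) ≠ 0) :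
    ∑ i, centralProj w z i * (w i : ℂ) = 1 := by
  simp only [centralProj, Pi.smul_apply, smul_eq_mul, mul_assoc, ← Finset.mul_sum,
    inv_mul_cancel₀ hz]

def projImage [Fintype ι] (S : Set (Matrix ι ι ℝ)) {m : ℕ} (K : Fin m → Set (ι → ℝ))
    (w : ι → ℝ) : Set (ι → ℂ) :=
  (fun p : Matrix ι ι ℝ × (ι → ℂ) => centralProj w (mulVecC p.1 p.2)) ''
    (S ×ˢ ⋃ j, unitComplexify (K j))

namespace IsMulticone

variable [Fintype ι] {S : Set (Matrix ι ι ℝ)} {m : ℕ} {K : Fin m → Set (ι → ℝ)} {w : ι → ℝ}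

lemma dotProduct_pos (hK : IsMulticone S K w) {j : Fin m} {u : ι → ℝ} (hu : u ∈ K j)
    (hu0 : u ≠ 0) : 0 < u ⬝ᵥ w :=
  hK.2.2.2.2.2.1 u (Set.mem_iUnion.2 ⟨j, hu⟩) hu0

lemma zero_notMem_interior (hK : IsMulticone S K w) (j : Fin m) :
    (0 : ι → ℝ) ∉ interior (K j) := by
  have hw : w ≠ 0 := by
    rintro rfl; simpa using hK.2.2.2.2.1
  exact zero_notMem_interior_of_dotProduct_pos (fun _ => hK.dotProduct_pos) hw

lemma sum_mul_ne_zero (hK : IsMulticone S K w) {j : Fin m} {z : ι → ℂ}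
    (hz : z ∈ complexify (K j)) (hz0 : z ≠ 0) : ∑ i, z i * (w i : ℂ) ≠ 0 :=
  sum_mul_ne_zero_of_mem_complexify (fun _ => hK.dotProduct_pos) hz hz0

lemma mulVecC_mem_interior (hK : IsMulticone S K w) {A : Matrix ι ι ℝ} (hA : A ∈ S)
    {j : Fin m} {z : ι → ℂ} (hz : z ∈ complexify (K j)) (hz0 : z ≠ 0) :
    ∃ ℓ, mulVecC A z ∈ interior (complexify (K ℓ)) ∧ mulVecC A z ≠ 0 := by
  obtain ⟨ℓ, hℓ⟩ := hK.2.2.2.2.2.2.1 A hA j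
  exact ⟨ℓ, mulVecC_mem_interior_complexify hℓ (hK.zero_notMem_interior ℓ) hz hz0⟩

lemma list_prod_mulVecC_mem [DecidableEq ι] (hK : IsMulticone S K w)
    {l : List (Matrix ι ι ℝ)} (hl : ∀ M ∈ l, M ∈ S) {j : Fin m} {z : ι → ℂ}
    (hz : z ∈ complexify (K j)) (hz0 : z ≠ 0) :
    ∃ ℓ, mulVecC l.prod z ∈ complexify (K ℓ) ∧ mulVecC l.prod z ≠ 0 := by
  induction l with
  | nil => exact ⟨j, by simpa [mulVecC_one] using hz, by simpa [mulVecC_one] using hz0⟩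
  | cons M l ih =>
    obtain ⟨ℓ, hℓ, hℓ0⟩ := ih fun M' hM' => hl M' (List.mem_cons_of_mem _ hM')
    obtain ⟨ℓ', h, h0⟩ := hK.mulVecC_mem_interior (hl M List.mem_cons_self) hℓ hℓ0
    rw [List.prod_cons, mulVecC_mul]
    exact ⟨ℓ', interior_subset h, h0⟩

lemma mulVecC_mem_of_mem_unitComplexify (hK : IsMulticone S K w) {A : Matrix ι ι ℝ}
    (hA : A ∈ S) {x : ι → ℂ} (hx : x ∈ ⋃ j, unitComplexify (K j)) :
    ∃ ℓ, mulVecC A x ∈ interior (complexify (K ℓ)) ∧ ∑ i, mulVecC A x i * (w i : ℂ) ≠ 0 := by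
  obtain ⟨j, hxj⟩ := Set.mem_iUnion.1 hx
  obtain ⟨hxK, hx0⟩ := unitComplexify_subset _ hxj
  obtain ⟨ℓ, h, h0⟩ := hK.mulVecC_mem_interior hA hxK hx0
  exact ⟨ℓ, h, hK.sum_mul_ne_zero (interior_subset h) h0⟩

lemma isCompact_projImage (hK : IsMulticone S K w) (hS : IsCompact S) :
    IsCompact (projImage S K w) := by
  have hX : IsCompact (⋃ j, unitComplexify (K j)) :=
    isCompact_iUnion fun j => isCompact_unitComplexify (hK.1 j)
  have hden : ∀ p ∈ S ×ˢ ⋃ j, unitComplexify (K j), ∑ i, mulVecC p.1 p.2 i * (w i : ℂ) ≠ 0 :=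
    fun p hp => (hK.mulVecC_mem_of_mem_unitComplexify hp.1 hp.2).choose_spec.2
  have hsum : Continuous fun p : Matrix ι ι ℝ × (ι → ℂ) => ∑ i, mulVecC p.1 p.2 i * (w i : ℂ) :=
    continuous_finsetSum _ fun i _ =>
      ((continuous_apply i).comp continuous_mulVecC).mul continuous_const
  exact (hS.prod hX).image_of_continuousOn
    ((hsum.continuousOn.inv₀ hden).smul continuous_mulVecC.continuousOn)

lemma projImage_subset (hK : IsMulticone S K w) :
    projImage S K w ⊆ {z | (∃ j, z ∈ interior (complexify (K j))) ∧ ∑ i, z i * (w i : ℂ) = 1} := by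
  rintro _ ⟨⟨A, x⟩, ⟨hA, hx⟩, rfl⟩
  obtain ⟨ℓ, h, h0⟩ := hK.mulVecC_mem_of_mem_unitComplexify hA hx
  exact ⟨⟨ℓ, smul_mem_interior_complexify (inv_ne_zero h0) h⟩, sum_centralProj_mul w h0⟩

lemma centralProj_mem_projImage [DecidableEq ι] (hK : IsMulticone S K w) {B : Matrix ι ι ℝ}
    (hB : B ∈ semigroupOf S) {j : Fin m} {z : ι → ℂ} (hz : z ∈ complexify (K j)) (hz0 : z ≠ 0) :
    centralProj w (mulVecC B z) ∈ projImage S K w := by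
  obtain ⟨_ | ⟨M, l⟩, hne, hl, rfl⟩ := hB
  · exact absurd rfl hne
  obtain ⟨ℓ, hℓ, hℓ0⟩ :=
    hK.list_prod_mulVecC_mem (fun M' hM' => hl M' (List.mem_cons_of_mem _ hM')) hz hz0
  obtain ⟨c, hc, x, hx, hcx⟩ := exists_smul_mem_unitComplexify (hK.2.2.2.1 ℓ) hℓ hℓ0
  refine ⟨(M, x), ⟨hl M List.mem_cons_self, Set.mem_iUnion.2 ⟨ℓ, hx⟩⟩, ?_⟩
  rw [List.prod_cons, mulVecC_mul, hcx, mulVecC_smul, centralProj_smul w hc]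

end IsMulticone

end

theorem stmt10_general {d m : ℕ}
    (S : Set (Matrix (Fin d) (Fin d) ℝ)) (hScpt : IsCompact S)
    (K : Fin m → Set (Fin d → ℝ)) (w : Fin d → ℝ) (hK : IsMulticone S K w)
    (Ω : Set (Fin d → ℂ))
    (hΩ : Ω = {z : Fin d → ℂ | (∃ j, z ∈ interior (complexify (K j))) ∧
      ∑ i, z i * (w i : ℂ) = 1})
    (U : Set (Fin d → ℂ))
    (hU : U = {z' : Fin d → ℂ | ∃ A ∈ semigroupOf S, ∃ z ∈ Ω,
      z' = (∑ i, mulVecC A z i * (w i : ℂ))⁻¹ • mulVecC A z}) :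
    IsCompact (closure U) ∧
    ∀ z ∈ closure U, (∑ i, z i * (w i : ℂ) = 1) ∧
      ∃ V : Set (Fin d → ℂ), IsOpen V ∧ z ∈ V ∧
        V ∩ {z' : Fin d → ℂ | ∑ i, z' i * (w i : ℂ) = 1} ⊆ Ω := by
  have hYΩ : projImage S K w ⊆ Ω := hΩ ▸ hK.projImage_subset
  have hUY : U ⊆ projImage S K w := by
    rw [hU]
    rintro _ ⟨A, hA, z, hz, rfl⟩
    obtain ⟨⟨j, hj⟩, hz1⟩ := hΩ ▸ hz
    refine hK.centralProj_mem_projImage hA (interior_subset hj) ?_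
    rintro rfl
    simp at hz1
  have hY := hK.isCompact_projImage hScpt
  have hclosure := closure_minimal hUY hY.isClosed
  refine ⟨hY.of_isClosed_subset isClosed_closure hclosure, fun z hz => ?_⟩
  obtain ⟨⟨j, hj⟩, hz1⟩ := hΩ ▸ hYΩ (hclosure hz)
  refine ⟨hz1, ⋃ ℓ, interior (complexify (K ℓ)), isOpen_iUnion fun _ => isOpen_interior,
    Set.mem_iUnion.2 ⟨j, hj⟩, ?_⟩
  rintro y ⟨hy, hy1⟩
  rw [hΩ]
  exact ⟨Set.mem_iUnion.1 hy, hy1⟩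

/-- Theorem 3.1(viii): the union of the images Ā(Ω) over the generated semigroup is
compactly contained in Ω (relative to the hyperplane ⟨z,w⟩ = 1). -/
theorem stmt10 {d m : ℕ} (hd : 1 ≤ d) (hm : 0 < m)
    (S : Set (Matrix (Fin d) (Fin d) ℝ)) (hSne : S.Nonempty) (hScpt : IsCompact S)
    (K : Fin m → Set (Fin d → ℝ)) (w : Fin d → ℝ) (hK : IsMulticone S K w)
    (Ω : Set (Fin d → ℂ))
    (hΩ : Ω = {z : Fin d → ℂ | (∃ j, z ∈ interior (complexify (K j))) ∧
      ∑ i, z i * (w i : ℂ) = 1})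
    (U : Set (Fin d → ℂ))
    (hU : U = {z' : Fin d → ℂ | ∃ A ∈ semigroupOf S, ∃ z ∈ Ω,
      z' = (∑ i, mulVecC A z i * (w i : ℂ))⁻¹ • mulVecC A z}) :
    IsCompact (closure U) ∧
    ∀ z ∈ closure U, (∑ i, z i * (w i : ℂ) = 1) ∧
      ∃ V : Set (Fin d → ℂ), IsOpen V ∧ z ∈ V ∧
        V ∩ {z' : Fin d → ℂ | ∑ i, z' i * (w i : ℂ) = 1} ⊆ Ω :=
  stmt10_general S hScpt K w hK Ω hΩ U hU
end
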